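/- arXiv:2011.02562 — 2 statements merged into one kernel-verified Lean document; each statement's English description precedes it below -/
import Mathlib

section
/- For every even cycle C_k (k even, k ≥ 4) and every nonzero kernel U, the homomorphism density t(C_k, U) is strictly positive. -/
open MeasureTheory

/-- A kernel: a bounded measurable symmetric real function (its values on `[0,1]²` are the
relevant ones). -/
structure Kernel : Type where
  toFun : ℝ → ℝ → ℝ
  symm : ∀ x y, toFun x y = toFun y x
  measurable : Measurable (Function.uncurry toFun)
  bounded : ∃ C : ℝ, ∀ x y, |toFun x y| ≤ C

/-- A kernel is nonzero if it is not a.e. zero on `[0,1]²`. -/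
def Kernel.Nonzero (U : Kernel) : Prop :=
  ¬ (∀ᵐ p : ℝ × ℝ ∂(volume.restrict ((Set.Icc (0:ℝ) 1) ×ˢ (Set.Icc (0:ℝ) 1))),
      U.toFun p.1 p.2 = 0)

/-- A kernel is balanced if its marginals vanish a.e. -/
def Kernel.Balanced (U : Kernel) : Prop :=
  ∀ᵐ x ∂(volume.restrict (Set.Icc (0:ℝ) 1)), (∫ y in Set.Icc (0:ℝ) 1, U.toFun x y) = 0

/-- The product of the kernel values over the edges of a graph. -/
noncomputable def edgeProd {V : Type} (H : SimpleGraph V) (U : Kernel) (x : V → ℝ) : ℝ :=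
  ∏ᶠ e ∈ H.edgeSet, Sym2.lift ⟨fun u v => U.toFun (x u) (x v), fun u v => U.symm (x u) (x v)⟩ e

/-- The homomorphism density `t(H, U)` of a finite simple graph in a kernel. -/
noncomputable def homDensity {V : Type} [Fintype V] (H : SimpleGraph V) (U : Kernel) : ℝ :=
  ∫ x in (Set.univ.pi fun _ : V => Set.Icc (0:ℝ) 1), edgeProd H U x

open Classical in
/-- The rooted homomorphism density `t^H_U(z)` of a graph `H` rooted at `w`. -/
noncomputable def rootedDensity {V : Type} [Fintype V] (H : SimpleGraph V) (w : V)
    (U : Kernel) (z : ℝ) : ℝ :=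
  ∫ x in (Set.univ.pi fun _ : {v : V // v ≠ w} => Set.Icc (0:ℝ) 1),
    edgeProd H U (fun v => if h : v = w then z else x ⟨v, h⟩)

/-- A bundled finite simple graph. -/
structure FinGraph : Type 1 where
  V : Type
  fintypeV : Fintype V
  G : SimpleGraph V

attribute [instance] FinGraph.fintypeV

def FinGraph.of {V : Type} [h : Fintype V] (G : SimpleGraph V) : FinGraph := ⟨V, h, G⟩

noncomputable def FinGraph.density (G : FinGraph) (U : Kernel) : ℝ := homDensity G.G U

/-- Number of edges of a bundled finite graph. -/
noncomputable def FinGraph.edges (G : FinGraph) : ℕ := G.G.edgeSet.ncard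

instance finiteSubgraph {V : Type} [Finite V] (G : SimpleGraph V) : Finite G.Subgraph := by
  classical
  exact Finite.of_injective (fun G' => (G'.verts, G'.Adj))
    (fun a b h => SimpleGraph.Subgraph.ext (congrArg Prod.fst h) (congrArg Prod.snd h))

open Classical in
/-- The multiset of all subgraphs of `G` having exactly `l` edges. -/
noncomputable def FinGraph.subs (G : FinGraph) (l : ℕ) : Multiset FinGraph :=
  ((Set.toFinite {G' : G.G.Subgraph | G'.edgeSet.ncard = l}).toFinset.val).map
    fun G' => FinGraph.of G'.coe

/-- `D` is an `l`-deck: a multiset of graphs each with exactly `l` edges. -/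
def IsDeck (D : Multiset FinGraph) (l : ℕ) : Prop := ∀ G ∈ D, G.edges = l

/-- The `l`-deck of a deck `D`: all `l`-edge subgraphs of the graphs of `D`. -/
noncomputable def subDeck (D : Multiset FinGraph) (l : ℕ) : Multiset FinGraph :=
  D.bind fun G => G.subs l

/-- `s_D(H)`: the number of subgraphs isomorphic to `H` of the graphs in `D`. -/
noncomputable def sD (D : Multiset FinGraph) (H : FinGraph) : ℕ :=
  (D.map fun G => Set.ncard {G' : G.G.Subgraph | Nonempty (G'.coe ≃g H.G)}).sum

/-- The coefficient `c^D_{U,l} = Σ_{G ∈ D} Σ_{H' ∈ G[l]} t(H', U)`. -/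
noncomputable def coeff (D : Multiset FinGraph) (U : Kernel) (l : ℕ) : ℝ :=
  ((subDeck D l).map fun H => H.density U).sum

/-- All the coefficients `c^D_{U,2}, c^D_{U,4}, …, c^D_{U,l}` vanish. -/
def AllCoeffZero (D : Multiset FinGraph) (U : Kernel) (l : ℕ) : Prop :=
  ∀ k, Even k → 0 < k → k ≤ l → coeff D U k = 0

/-- Among `c^D_{U,2}, c^D_{U,4}, …, c^D_{U,l}` not all vanish and the first nonzero one
is positive. -/
def FirstNonzeroPos (D : Multiset FinGraph) (U : Kernel) (l : ℕ) : Prop :=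
  ∃ k, Even k ∧ 0 < k ∧ k ≤ l ∧ 0 < coeff D U k ∧
    ∀ j, Even j → 0 < j → j < k → coeff D U j = 0

/-- Among `c^D_{U,2}, c^D_{U,4}, …, c^D_{U,l}` not all vanish and the first nonzero one
is negative. -/
def FirstNonzeroNeg (D : Multiset FinGraph) (U : Kernel) (l : ℕ) : Prop :=
  ∃ k, Even k ∧ 0 < k ∧ k ≤ l ∧ coeff D U k < 0 ∧
    ∀ j, Even j → 0 < j → j < k → coeff D U j = 0

def ClassI (D : Multiset FinGraph) (l : ℕ) : Prop :=
  ∀ U : Kernel, U.Nonzero → FirstNonzeroPos D U l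

def ClassII (D : Multiset FinGraph) (l : ℕ) : Prop :=
  ∃ U : Kernel, FirstNonzeroNeg D U l

def ClassIII (D : Multiset FinGraph) (l : ℕ) : Prop :=
  (∃ U : Kernel, U.Nonzero ∧ AllCoeffZero D U l) ∧
  ∀ U : Kernel, AllCoeffZero D U l ∨ FirstNonzeroPos D U l

/-- The cycle `C_n` as a bundled graph. -/
def cycleF (n : ℕ) : FinGraph := FinGraph.of (SimpleGraph.cycleGraph n)

/-- The path `P_n` with `n` edges as a bundled graph. -/
def pathF (n : ℕ) : FinGraph := FinGraph.of (SimpleGraph.pathGraph (n+1))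

/-- Gluing two graphs by identifying the vertex `v` of `G` with the vertex `w` of `H`. -/
def glue {V W : Type} (G : SimpleGraph V) (H : SimpleGraph W) (v : V) (w : W) :
    SimpleGraph (V ⊕ {x : W // x ≠ w}) where
  Adj a b :=
    Sum.elim (fun a => Sum.elim (fun b => G.Adj a b) (fun b => a = v ∧ H.Adj w b.1) b)
             (fun a => Sum.elim (fun b => b = v ∧ H.Adj w a.1) (fun b => H.Adj a.1 b.1) b) a
  symm := by
    constructor
    rintro (a | a) (b | b) h
    · exact G.adj_symm h
    · exact h
    · exact h
    · exact H.adj_symm h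
  loopless := by
    constructor
    rintro (a | a) h
    · exact G.irrefl h
    · exact H.irrefl h

/-- Disjoint union of two simple graphs. -/
def disjSum {V W : Type} (G : SimpleGraph V) (H : SimpleGraph W) : SimpleGraph (V ⊕ W) where
  Adj a b :=
    Sum.elim (fun a => Sum.elim (fun b => G.Adj a b) (fun _ => False) b)
             (fun a => Sum.elim (fun _ => False) (fun b => H.Adj a b) b) a
  symm := by
    constructor
    rintro (a | a) (b | b) h
    · exact G.adj_symm h
    · exact h.elim
    · exact h.elim
    · exact H.adj_symm h
  loopless := by
    constructor
    rintro (a | a) h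
    · exact G.irrefl h
    · exact H.irrefl h

/-- Disjoint union `G ∪ H` of bundled graphs. -/
noncomputable def FinGraph.disjU (G H : FinGraph) : FinGraph := FinGraph.of (disjSum G.G H.G)

open Classical in
/-- `C_k ⊕ P_n ⊕ C_l`: two cycles joined by a path with `n` edges; for `n = 0` this is
`C_k ⊕ C_l`, two cycles sharing one vertex. (Junk value if `k = 0` or `l = 0`.) -/
noncomputable def cpcF (k n l : ℕ) : FinGraph :=
  if h : 0 < k ∧ 0 < l then
    let A := glue (SimpleGraph.cycleGraph k) (SimpleGraph.pathGraph (n+1)) ⟨0, h.1⟩ 0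
    let ep : Fin k ⊕ {x : Fin (n+1) // x ≠ 0} :=
      if hn : n = 0 then Sum.inl ⟨0, h.1⟩
      else Sum.inr ⟨Fin.last n, fun hc => hn (by simpa using congrArg Fin.val hc)⟩
    FinGraph.of (glue A (SimpleGraph.cycleGraph l) ep ⟨0, h.2⟩)
  else FinGraph.of (⊥ : SimpleGraph (Fin 0))


/-!
Let `T` be the integral operator of `U` on `L²[0,1]`. The density `t(C_k, U)` is the integral of
the diagonal of the kernel of `T ^ k`. For `k = 2j + 2`, symmetry of `U` writes this diagonal as
`x ↦ ∫ z, W(x, z) ^ 2` with `W` the kernel of `T ^ (j + 1)`, so `t(C_k, U) ≥ 0`, and equality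
forces `T ^ (j + 1) = 0`. The same identity shows that `T ^ (m + 1) = 0` forces `T ^ m = 0` for
`m ≥ 2`. Finally `T ^ 2 = 0` gives `‖T g‖² = ⟪T ^ 2 g, g⟫ = 0` for bounded `g`, so `U` integrates
to zero over every rectangle and vanishes almost everywhere.
-/

open Set Function

lemma integrable_of_norm_le {α : Type*} [MeasurableSpace α] {μ : Measure α} [IsFiniteMeasure μ]
    {f : α → ℝ} (hf : Measurable f) {C : ℝ} (h : ∀ x, ‖f x‖ ≤ C) : Integrable f μ :=
  .of_bound hf.aestronglyMeasurable C (ae_of_all _ h)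

lemma ae_eq_zero_of_integral_sq_eq_zero {α : Type*} [MeasurableSpace α] {μ : Measure α}
    {f : α → ℝ} (hf : Integrable (fun x => f x ^ 2) μ) (h : ∫ x, f x ^ 2 ∂μ = 0) :
    ∀ᵐ x ∂μ, f x = 0 := by
  filter_upwards [(integral_eq_zero_iff_of_nonneg (fun x => sq_nonneg (f x)) hf).1 h] with x hx
  exact pow_eq_zero_iff two_ne_zero |>.1 hx

lemma integral_mul_integral_swap {α β : Type*} [MeasurableSpace α] [MeasurableSpace β]
    {μ : Measure α} {ν : Measure β} [SFinite μ] [SFinite ν] {f : α → ℝ} {K : α → β → ℝ}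
    {g : β → ℝ} (h : Integrable (fun p : α × β => f p.1 * K p.1 p.2 * g p.2) (μ.prod ν)) :
    ∫ x, f x * ∫ y, K x y * g y ∂ν ∂μ = ∫ y, (∫ x, f x * K x y ∂μ) * g y ∂ν := by
  simp_rw [← integral_const_mul, ← integral_mul_const, ← mul_assoc]
  exact integral_integral_swap h

lemma integral_fin_cons {α E : Type*} [MeasurableSpace α] [NormedAddCommGroup E]
    [NormedSpace ℝ E] [CompleteSpace E] (μ : Measure α) [SigmaFinite μ] {n : ℕ}
    {f : (Fin (n + 1) → α) → E} (hf : Integrable f (Measure.pi fun _ => μ)) :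
    ∫ x, f x ∂(Measure.pi fun _ => μ)
      = ∫ a, ∫ y, f (Fin.cons a y) ∂(Measure.pi fun _ => μ) ∂μ := by
  have hmp := (measurePreserving_piFinSuccAbove (fun _ : Fin (n + 1) => μ) 0).symm
  rw [← hmp.integral_comp', integral_prod]
  · simp [MeasurableEquiv.piFinSuccAbove_symm_apply, Fin.insertNthEquiv, Fin.insertNth_zero']
  · exact (hmp.integrable_comp_emb (MeasurableEquiv.measurableEmbedding _)).2 hf

lemma ae_eq_zero_of_forall_setIntegral_prod_eq_zero {α β E : Type*} [MeasurableSpace α]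
    [MeasurableSpace β] [NormedAddCommGroup E] [NormedSpace ℝ E] [CompleteSpace E]
    {μ : Measure (α × β)} {f : α × β → E} (hf : Integrable f μ)
    (h : ∀ s, MeasurableSet s → ∀ t, MeasurableSet t → ∫ p in s ×ˢ t, f p ∂μ = 0) :
    f =ᵐ[μ] 0 := by
  suffices ∀ S, MeasurableSet S → ∫ p in S, f p ∂μ = 0 from
    hf.ae_eq_zero_of_forall_setIntegral_eq_zero fun S hS _ => this S hS
  intro S hS
  induction S, hS using MeasurableSpace.induction_on_inter generateFrom_prod.symm
    isPiSystem_prod with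
  | empty => simp
  | basic _ hst =>
    obtain ⟨s, hs, t, ht, rfl⟩ := hst
    exact h s hs t ht
  | compl S hS ih =>
    have hsum := integral_add_compl hS hf
    rw [ih, zero_add] at hsum
    rw [hsum, ← setIntegral_univ, ← univ_prod_univ]
    exact h _ .univ _ .univ
  | iUnion S hdisj hS ih => simp [integral_iUnion hS hdisj hf.integrableOn, ih]

namespace SimpleGraph

lemma cycleGraph_adj_iff_eq_add_one {n : ℕ} {u v : Fin (n + 2)} :
    (cycleGraph (n + 2)).Adj u v ↔ v = u + 1 ∨ u = v + 1 := by
  rw [cycleGraph_adj, sub_eq_iff_eq_add, sub_eq_iff_eq_add, add_comm 1 v, add_comm 1 u, or_comm]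

lemma cycleGraph_edgeSet (n : ℕ) :
    (cycleGraph (n + 2)).edgeSet = range fun i => s(i, i + 1) := by
  ext e
  induction e using Sym2.ind with
  | h u v =>
    simp only [mem_edgeSet, cycleGraph_adj_iff_eq_add_one, mem_range, Sym2.eq_iff]
    constructor
    · rintro (rfl | rfl)
      exacts [⟨u, .inl ⟨rfl, rfl⟩⟩, ⟨v, .inr ⟨rfl, rfl⟩⟩]
    · rintro ⟨i, ⟨rfl, rfl⟩ | ⟨rfl, rfl⟩⟩
      exacts [.inl rfl, .inr rfl]

lemma injective_cycleGraph_edge (n : ℕ) : Injective fun i : Fin (n + 3) => s(i, i + 1) := by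
  intro i j hij
  rcases Sym2.eq_iff.1 hij with ⟨h, -⟩ | ⟨rfl, h⟩
  · exact h
  · have one_add_one_ne_zero : (1 + 1 : Fin (n + 3)) ≠ 0 := by
      simp [Fin.ext_iff, Fin.val_add, Nat.mod_eq_of_lt]
    exact absurd (add_eq_left.1 ((add_assoc _ _ _).symm.trans h)) one_add_one_ne_zero

end SimpleGraph

namespace Kernel

instance : CoeFun Kernel fun _ => ℝ → ℝ → ℝ := ⟨toFun⟩

variable (U : Kernel)

@[fun_prop]
lemma measurable_comp {α : Type*} [MeasurableSpace α] {f g : α → ℝ} (hf : Measurable f)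
    (hg : Measurable g) : Measurable fun a => U (f a) (g a) :=
  U.measurable.comp (hf.prodMk hg)

lemma measurableSet_eq_zero : MeasurableSet {p : ℝ × ℝ | U p.1 p.2 = 0} :=
  U.measurable (measurableSet_singleton 0)

noncomputable def pathWeight (n : ℕ) (x : Fin (n + 1) → ℝ) (b : ℝ) : ℝ :=
  (∏ i : Fin n, U (x i.castSucc) (x i.succ)) * U (x (Fin.last n)) b

@[fun_prop]
lemma measurable_pathWeight (n : ℕ) {α : Type*} [MeasurableSpace α] {f : α → Fin (n + 1) → ℝ}
    {g : α → ℝ} (hf : Measurable f) (hg : Measurable g) :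
    Measurable fun a => U.pathWeight n (f a) (g a) := by
  unfold pathWeight
  fun_prop

lemma norm_pathWeight_le {B : ℝ} (hB : ∀ x y, ‖U x y‖ ≤ B) (n : ℕ) (x : Fin (n + 1) → ℝ)
    (b : ℝ) : ‖U.pathWeight n x b‖ ≤ B ^ (n + 1) := by
  rw [pow_succ]
  refine norm_mul_le_of_le ?_ (hB _ _)
  calc ‖∏ i : Fin n, U (x i.castSucc) (x i.succ)‖
      ≤ ∏ i : Fin n, ‖U (x i.castSucc) (x i.succ)‖ := Finset.norm_prod_le _ _
    _ ≤ ∏ _i : Fin n, B := Finset.prod_le_prod (fun _ _ => norm_nonneg _) fun _ _ => hB _ _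
    _ = B ^ n := by simp

lemma pathWeight_cons (n : ℕ) (a : ℝ) (y : Fin (n + 1) → ℝ) (b : ℝ) :
    U.pathWeight (n + 1) (Fin.cons a y) b = U a (y 0) * U.pathWeight n y b := by
  simp only [pathWeight, Fin.prod_univ_succ, Fin.castSucc_zero, Fin.cons_zero, Fin.castSucc_succ,
    Fin.cons_succ, ← Fin.succ_last, mul_assoc]

lemma prod_cycle_eq_pathWeight (n : ℕ) (x : Fin (n + 1) → ℝ) :
    ∏ i, U (x i) (x (i + 1)) = U.pathWeight n x (x 0) := by
  rw [Fin.prod_univ_castSucc, Fin.last_add_one]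
  simp_rw [Fin.coeSucc_eq_succ]
  rfl

lemma edgeProd_cycleGraph (n : ℕ) (x : Fin (n + 3) → ℝ) :
    edgeProd (SimpleGraph.cycleGraph (n + 3)) U x = ∏ i, U (x i) (x (i + 1)) := by
  rw [edgeProd, SimpleGraph.cycleGraph_edgeSet,
    finprod_mem_range (SimpleGraph.injective_cycleGraph_edge n), finprod_eq_prod_of_fintype]
  rfl

section Iterate

variable (μ : Measure ℝ) [IsFiniteMeasure μ]

/-- The kernel of the `(n + 1)`-st power of the integral operator `f ↦ ∫ y, U x y * f y ∂μ`. -/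
noncomputable def iter : ℕ → ℝ → ℝ → ℝ
  | 0 => U
  | n + 1 => fun x y => ∫ z, iter n x z * U z y ∂μ

lemma measurable_iter : ∀ n, Measurable (uncurry (U.iter μ n))
  | 0 => U.measurable
  | n + 1 => by
    have hm : Measurable fun q : (ℝ × ℝ) × ℝ => U.iter μ n q.1.1 q.2 * U q.2 q.1.2 :=
      ((measurable_iter n).comp (measurable_fst.fst.prodMk measurable_snd)).mul
        (U.measurable_comp measurable_snd measurable_fst.snd)
    exact hm.stronglyMeasurable.integral_prod_right'.measurable

@[fun_prop]
lemma measurable_iter_comp (n : ℕ) {α : Type*} [MeasurableSpace α] {f g : α → ℝ}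
    (hf : Measurable f) (hg : Measurable g) : Measurable fun a => U.iter μ n (f a) (g a) :=
  (U.measurable_iter μ n).comp (hf.prodMk hg)

lemma exists_norm_iter_le : ∀ n, ∃ C, ∀ x y, ‖U.iter μ n x y‖ ≤ C
  | 0 => U.bounded
  | n + 1 => by
    obtain ⟨C, hC⟩ := exists_norm_iter_le n
    obtain ⟨B, hB⟩ := U.bounded
    exact ⟨C * B * μ.real univ, fun x y =>
      norm_integral_le_of_norm_le_const (ae_of_all _ fun z => norm_mul_le_of_le (hC x z) (hB z y))⟩

lemma iter_add (a b : ℕ) (x y : ℝ) :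
    U.iter μ (a + b + 1) x y = ∫ z, U.iter μ a x z * U.iter μ b z y ∂μ := by
  induction b generalizing y with
  | zero => rfl
  | succ b ih =>
    obtain ⟨Ca, hCa⟩ := U.exists_norm_iter_le μ a
    obtain ⟨Cb, hCb⟩ := U.exists_norm_iter_le μ b
    obtain ⟨B, hB⟩ := U.bounded
    have hint : Integrable (fun p : ℝ × ℝ => U.iter μ a x p.1 * U.iter μ b p.1 p.2 * U p.2 y)
        (μ.prod μ) :=
      integrable_of_norm_le (by fun_prop) fun p =>
        norm_mul_le_of_le (norm_mul_le_of_le (hCa x p.1) (hCb p.1 p.2)) (hB p.2 y)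
    change ∫ z, U.iter μ (a + b + 1) x z * U z y ∂μ = _
    simp_rw [ih]
    exact (integral_mul_integral_swap hint).symm

lemma iter_succ' (n : ℕ) (x y : ℝ) : U.iter μ (n + 1) x y = ∫ z, U x z * U.iter μ n z y ∂μ := by
  rw [← zero_add n, U.iter_add μ 0 n, zero_add]
  rfl

lemma iter_symm : ∀ n x y, U.iter μ n x y = U.iter μ n y x
  | 0, x, y => U.symm x y
  | n + 1, x, y => by
    rw [iter_succ']
    refine integral_congr_ae (ae_of_all _ fun z => ?_)
    change U x z * U.iter μ n z y = U.iter μ n y z * U z x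
    rw [iter_symm n z y, U.symm x z, mul_comm]

lemma iter_add_self_diag (j : ℕ) (x : ℝ) :
    U.iter μ (j + j + 1) x x = ∫ z, U.iter μ j x z ^ 2 ∂μ := by
  simp_rw [iter_add, sq, U.iter_symm μ j _ x]

lemma integral_pathWeight (n : ℕ) (a b : ℝ) :
    ∫ y, U.pathWeight n (Fin.cons a y) b ∂(Measure.pi fun _ => μ) = U.iter μ n a b := by
  obtain ⟨B, hB⟩ := U.bounded
  induction n generalizing a with
  | zero => simp [pathWeight, iter, Measure.real]
  | succ n ih =>
    rw [integral_fin_cons μ (integrable_of_norm_le (by fun_prop) fun y =>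
      U.norm_pathWeight_le hB _ _ _)]
    simp_rw [pathWeight_cons, Fin.cons_zero, integral_const_mul, ih, iter_succ']

lemma integral_prod_cycle (n : ℕ) :
    ∫ x, ∏ i : Fin (n + 1), U (x i) (x (i + 1)) ∂(Measure.pi fun _ => μ)
      = ∫ a, U.iter μ n a a ∂μ := by
  obtain ⟨B, hB⟩ := U.bounded
  simp_rw [prod_cycle_eq_pathWeight]
  rw [integral_fin_cons μ (integrable_of_norm_le (by fun_prop) fun x =>
    U.norm_pathWeight_le hB _ _ _)]
  simp_rw [Fin.cons_zero, integral_pathWeight]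

lemma ae_ae_iter_eq_zero_of_integral_diag_eq_zero (j : ℕ)
    (h : ∫ x, U.iter μ (j + j + 1) x x ∂μ = 0) : ∀ᵐ x ∂μ, ∀ᵐ z ∂μ, U.iter μ j x z = 0 := by
  obtain ⟨C, hC⟩ := U.exists_norm_iter_le μ j
  have hsq_le : ∀ x z, ‖U.iter μ j x z ^ 2‖ ≤ C ^ 2 := fun x z => by
    simpa only [norm_pow] using pow_le_pow_left₀ (norm_nonneg _) (hC x z) 2
  have hsq_int : ∀ x, Integrable (fun z => U.iter μ j x z ^ 2) μ := fun x =>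
    integrable_of_norm_le (by fun_prop) (hsq_le x)
  have hint : Integrable (fun x => ∫ z, U.iter μ j x z ^ 2 ∂μ) μ :=
    integrable_of_norm_le
      (Measurable.stronglyMeasurable (f := fun p : ℝ × ℝ => U.iter μ j p.1 p.2 ^ 2)
        (by fun_prop)).integral_prod_right'.measurable
      fun x => norm_integral_le_of_norm_le_const (ae_of_all _ (hsq_le x))
  simp_rw [iter_add_self_diag] at h
  filter_upwards [(integral_eq_zero_iff_of_nonneg
    (fun x => integral_nonneg fun z => sq_nonneg _) hint).1 h] with x hx
  exact ae_eq_zero_of_integral_sq_eq_zero (hsq_int x) hx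

lemma ae_integral_mul_eq_zero_of_iter_one (h : ∀ᵐ x ∂μ, ∀ᵐ y ∂μ, U.iter μ 1 x y = 0)
    {g : ℝ → ℝ} (hg : Measurable g) {C : ℝ} (hC : ∀ y, ‖g y‖ ≤ C) :
    ∀ᵐ x ∂μ, ∫ y, U x y * g y ∂μ = 0 := by
  obtain ⟨B, hB⟩ := U.bounded
  set Tg := fun x => ∫ y, U x y * g y ∂μ
  have hTg_meas : Measurable Tg :=
    (Measurable.stronglyMeasurable (f := fun p : ℝ × ℝ => U p.1 p.2 * g p.2)
      (by fun_prop)).integral_prod_right'.measurable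
  have hTg_le : ∀ x, ‖Tg x‖ ≤ B * C * μ.real univ := fun x =>
    norm_integral_le_of_norm_le_const (ae_of_all _ fun y => norm_mul_le_of_le (hB x y) (hC y))
  have hTTg : ∀ᵐ y ∂μ, ∫ x, Tg x * U x y ∂μ = 0 := by
    filter_upwards [h] with y hy
    calc ∫ x, Tg x * U x y ∂μ = ∫ x, U y x * ∫ w, U x w * g w ∂μ ∂μ := by
          simp_rw [U.symm _ y, mul_comm (Tg _)]
          rfl
      _ = ∫ w, U.iter μ 1 y w * g w ∂μ := integral_mul_integral_swap <|
          integrable_of_norm_le (by fun_prop) fun p =>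
            norm_mul_le_of_le (norm_mul_le_of_le (hB y p.1) (hB p.1 p.2)) (hC p.2)
      _ = 0 := integral_eq_zero_of_ae (by filter_upwards [hy] with w hw; simp [hw])
  refine ae_eq_zero_of_integral_sq_eq_zero (f := Tg)
    (integrable_of_norm_le (hTg_meas.pow_const 2) (C := (B * C * μ.real univ) ^ 2) fun x => ?_) ?_
  · rw [norm_pow]
    exact pow_le_pow_left₀ (norm_nonneg _) (hTg_le x) 2
  calc ∫ x, Tg x ^ 2 ∂μ = ∫ x, Tg x * ∫ y, U x y * g y ∂μ ∂μ := by simp_rw [sq]; rfl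
    _ = ∫ y, (∫ x, Tg x * U x y ∂μ) * g y ∂μ := integral_mul_integral_swap <|
        integrable_of_norm_le (by fun_prop) fun p =>
          norm_mul_le_of_le (norm_mul_le_of_le (hTg_le p.1) (hB p.1 p.2)) (hC p.2)
    _ = 0 := integral_eq_zero_of_ae (by filter_upwards [hTTg] with y hy; simp [hy])

lemma ae_eq_zero_of_iter_one (h : ∀ᵐ x ∂μ, ∀ᵐ y ∂μ, U.iter μ 1 x y = 0) :
    ∀ᵐ p ∂μ.prod μ, U p.1 p.2 = 0 := by
  obtain ⟨B, hB⟩ := U.bounded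
  have hint : Integrable (fun p : ℝ × ℝ => U p.1 p.2) (μ.prod μ) :=
    integrable_of_norm_le U.measurable fun p => hB p.1 p.2
  refine ae_eq_zero_of_forall_setIntegral_prod_eq_zero hint fun s _ t ht => ?_
  have hT := U.ae_integral_mul_eq_zero_of_iter_one μ h (measurable_one.indicator ht) (C := 1)
    fun y => by by_cases hy : y ∈ t <;> simp [hy]
  rw [setIntegral_prod _ hint.integrableOn]
  refine integral_eq_zero_of_ae (ae_restrict_of_ae ?_)
  filter_upwards [hT] with x hx
  rw [Pi.zero_apply, ← hx, ← integral_indicator ht]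
  congr 1
  ext y
  by_cases hy : y ∈ t <;> simp [hy]

lemma ae_ae_iter_eq_zero_of_succ :
    ∀ n, (∀ᵐ x ∂μ, ∀ᵐ y ∂μ, U.iter μ (n + 1) x y = 0) → ∀ᵐ x ∂μ, ∀ᵐ y ∂μ, U.iter μ n x y = 0
  | 0, h => (Measure.ae_prod_iff_ae_ae U.measurableSet_eq_zero).1 (U.ae_eq_zero_of_iter_one μ h)
  | n + 1, h => by
    refine U.ae_ae_iter_eq_zero_of_integral_diag_eq_zero μ (n + 1) (integral_eq_zero_of_ae ?_)
    filter_upwards [h] with x hx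
    rw [show n + 1 + (n + 1) + 1 = n + 2 + n + 1 by ring, iter_add]
    exact integral_eq_zero_of_ae (by filter_upwards [hx] with z hz; simp [hz])

lemma ae_ae_eq_zero_of_iter (n : ℕ) (h : ∀ᵐ x ∂μ, ∀ᵐ y ∂μ, U.iter μ n x y = 0) :
    ∀ᵐ x ∂μ, ∀ᵐ y ∂μ, U x y = 0 := by
  induction n with
  | zero => exact h
  | succ n ih => exact ih (U.ae_ae_iter_eq_zero_of_succ μ n h)

theorem integral_iter_diag_pos (hU : ¬ ∀ᵐ x ∂μ, ∀ᵐ y ∂μ, U x y = 0) (j : ℕ) :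
    0 < ∫ x, U.iter μ (j + j + 1) x x ∂μ := by
  refine lt_of_le_of_ne (integral_nonneg fun x => ?_) fun h => hU ?_
  · rw [iter_add_self_diag]
    exact integral_nonneg fun z => sq_nonneg _
  · exact U.ae_ae_eq_zero_of_iter μ j (U.ae_ae_iter_eq_zero_of_integral_diag_eq_zero μ j h.symm)

end Iterate

lemma homDensity_cycleGraph (n : ℕ) :
    homDensity (SimpleGraph.cycleGraph (n + 3)) U
      = ∫ x, U.iter (volume.restrict (Icc 0 1)) (n + 2) x x ∂volume.restrict (Icc 0 1) := by
  rw [homDensity, volume_pi, Measure.restrict_pi_pi]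
  simp_rw [edgeProd_cycleGraph]
  exact U.integral_prod_cycle _ (n + 2)

lemma Nonzero.not_ae_ae {U : Kernel} (hU : U.Nonzero) :
    ¬ ∀ᵐ x ∂volume.restrict (Icc (0 : ℝ) 1), ∀ᵐ y ∂volume.restrict (Icc (0 : ℝ) 1), U x y = 0 := by
  rwa [Nonzero, Measure.volume_eq_prod, ← Measure.prod_restrict,
    Measure.ae_prod_iff_ae_ae U.measurableSet_eq_zero] at hU

end Kernel

/-- For every even cycle `C_k` (`k` even, `k ≥ 4`) and every nonzero kernel `U`,
the homomorphism density `t(C_k, U)` is strictly positive. -/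
theorem even_cycle_density_pos (k : ℕ) (hke : Even k) (hk4 : 4 ≤ k)
    (U : Kernel) (hU : U.Nonzero) :
    0 < homDensity (SimpleGraph.cycleGraph k) U := by
  obtain ⟨j, rfl⟩ := hke
  obtain ⟨n, hn⟩ : ∃ n, j + j = n + 3 := ⟨j + j - 3, by omega⟩
  rw [hn, U.homDensity_cycleGraph, show n + 2 = (j - 1) + (j - 1) + 1 by omega]
  exact U.integral_iter_diag_pos _ hU.not_ae_ae (j - 1)
end

section
/- For every ℓ-deck D and every kernel U, the coefficient c^D_{U,2} is nonnegative. Moreover, if s_D(P_2) > 0, then c^D_{U,2} = 0 if and only if the kernel U is balanced. -/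
open MeasureTheory

/-!
A graph with two edges is either a path `P₂` or a matching `2K₂`. Writing `d_U(x) = ∫ U(x,y) dy`
for the degree function, Fubini gives `t(P₂, U) = ∫ d_U²` and `t(2K₂, U) = (∫ d_U)²`: both are
nonnegative and both vanish when `U` is balanced, so `c^D_{U,2}`, a sum of such densities, is
nonnegative and vanishes for balanced `U`. Conversely, a copy of `P₂` in `D` contributes `∫ d_U²`
to `c^D_{U,2}`, so `c^D_{U,2} = 0` forces `d_U = 0` almost everywhere.
-/

namespace MeasureTheory

theorem MeasurePreserving.integral_comp_of_aestronglyMeasurable {α β : Type*}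
    [MeasurableSpace α] [MeasurableSpace β] {μ : Measure α} {ν : Measure β} {f : α → β}
    (hf : MeasurePreserving f μ ν) {g : β → ℝ} (hg : AEStronglyMeasurable g ν) :
    ∫ x, g (f x) ∂μ = ∫ y, g y ∂ν := by
  rw [← hf.map_eq] at hg ⊢
  exact (integral_map hf.aemeasurable hg).symm

variable {X : Type*} [MeasurableSpace X] (μ : Measure X) [IsProbabilityMeasure μ]
  {V : Type*} [Fintype V]

theorem measurePreserving_pi_subtype_prod (p : V → Prop) [DecidablePred p]
    {Y Z : Type*} [MeasurableSpace Y] [MeasurableSpace Z] {ν₁ : Measure Y} {ν₂ : Measure Z}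
    {f : ({v // p v} → X) → Y} {g : ({v // ¬ p v} → X) → Z}
    (hf : MeasurePreserving f (Measure.pi fun _ => μ) ν₁)
    (hg : MeasurePreserving g (Measure.pi fun _ => μ) ν₂) :
    MeasurePreserving (fun x : V → X => (f fun v => x v, g fun v => x v))
      (Measure.pi fun _ => μ) (ν₁.prod ν₂) :=
  (hf.prod hg).comp (measurePreserving_piEquivPiSubtypeProd (fun _ => μ) p)

variable {μ} {a b c d : V}

theorem measurePreserving_eval_pair (hab : a ≠ b) :
    MeasurePreserving (fun x : V → X => (x a, x b)) (Measure.pi fun _ => μ) (μ.prod μ) := by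
  classical
  -- the instance of `measurePreserving_piEquivPiSubtypeProd`, not `Fintype.subtypeEq`
  let : Fintype {v // v = a} := Subtype.fintype _
  exact measurePreserving_pi_subtype_prod μ (· = a)
    (measurePreserving_eval _ (⟨a, rfl⟩ : {v // v = a})) (measurePreserving_eval _ ⟨b, hab.symm⟩)

theorem measurePreserving_eval_triple (hab : a ≠ b) (hac : a ≠ c) (hbc : b ≠ c) :
    MeasurePreserving (fun x : V → X => (x a, x b, x c)) (Measure.pi fun _ => μ)
      (μ.prod (μ.prod μ)) := by
  classical
  let : Fintype {v // v = a} := Subtype.fintype _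
  exact measurePreserving_pi_subtype_prod μ (· = a)
    (measurePreserving_eval _ (⟨a, rfl⟩ : {v // v = a}))
    (measurePreserving_eval_pair (a := ⟨b, hab.symm⟩) (b := ⟨c, hac.symm⟩)
      fun h => hbc (congrArg Subtype.val h))

theorem measurePreserving_eval_pair_pair (hab : a ≠ b) (hcd : c ≠ d) (hac : a ≠ c) (had : a ≠ d)
    (hbc : b ≠ c) (hbd : b ≠ d) :
    MeasurePreserving (fun x : V → X => ((x a, x b), (x c, x d))) (Measure.pi fun _ => μ)
      ((μ.prod μ).prod (μ.prod μ)) := by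
  classical
  exact measurePreserving_pi_subtype_prod μ (fun v => v = a ∨ v = b)
    (measurePreserving_eval_pair (a := ⟨a, .inl rfl⟩) (b := ⟨b, .inr rfl⟩)
      fun h => hab (congrArg Subtype.val h))
    (measurePreserving_eval_pair (a := ⟨c, by grind⟩) (b := ⟨d, by grind⟩)
      fun h => hcd (congrArg Subtype.val h))

end MeasureTheory

namespace SimpleGraph

theorem exists_path_or_matching_of_edgeSet_ncard_eq_two {V : Type*} {H : SimpleGraph V}
    (h : H.edgeSet.ncard = 2) :
    (∃ a b c, a ≠ b ∧ a ≠ c ∧ b ≠ c ∧ H.edgeSet = {s(a, b), s(b, c)}) ∨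
    (∃ a b c d, a ≠ b ∧ c ≠ d ∧ a ≠ c ∧ a ≠ d ∧ b ≠ c ∧ b ≠ d ∧
      H.edgeSet = {s(a, b), s(c, d)}) := by
  obtain ⟨e₁, e₂, hne, hE⟩ := Set.ncard_eq_two.mp h
  induction e₁ using Sym2.ind with | _ a b => ?_
  induction e₂ using Sym2.ind with | _ c d => ?_
  have hab : a ≠ b := (H.mem_edgeSet.mp (hE ▸ Set.mem_insert _ _)).ne
  have hcd : c ≠ d := (H.mem_edgeSet.mp (hE ▸ Set.mem_insert_of_mem _ rfl)).ne
  rcases eq_or_ne c b with rfl | hcb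
  · exact .inl ⟨a, c, d, hab, fun h => hne (by rw [h, Sym2.eq_swap]), hcd, hE⟩
  rcases eq_or_ne c a with rfl | hca
  · exact .inl ⟨b, c, d, hab.symm, fun h => hne (by rw [h]), hcd, by rw [hE, Sym2.eq_swap]⟩
  rcases eq_or_ne d b with rfl | hdb
  · exact .inl ⟨a, d, c, hab, fun h => hne (by rw [h]), hcd.symm,
      by rw [hE, Sym2.eq_swap (a := c)]⟩
  rcases eq_or_ne d a with rfl | hda
  · exact .inl ⟨b, d, c, hab.symm, fun h => hne (by rw [h, Sym2.eq_swap]), hcd.symm,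
      by rw [hE, Sym2.eq_swap (a := c), Sym2.eq_swap (a := d)]⟩
  exact .inr ⟨a, b, c, d, hab, hcd, hca.symm, hda.symm, hcb.symm, hdb.symm, hE⟩

theorem Iso.edgeSet_eq_of_pathGraph_three {V : Type*} {H : SimpleGraph V}
    (φ : H ≃g pathGraph 3) : H.edgeSet = {s(φ.symm 0, φ.symm 1), s(φ.symm 1, φ.symm 2)} := by
  ext e
  induction e using Sym2.ind with | _ u v => ?_
  obtain ⟨i, rfl⟩ := φ.symm.surjective u
  obtain ⟨j, rfl⟩ := φ.symm.surjective v
  rw [mem_edgeSet, φ.symm.map_adj_iff]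
  simp only [Set.mem_insert_iff, Set.mem_singleton_iff, Sym2.eq_iff,
    EmbeddingLike.apply_eq_iff_eq, pathGraph_adj]
  revert i j
  decide

theorem Iso.edgeSet_ncard_eq {V W : Type*} {G : SimpleGraph V} {G' : SimpleGraph W}
    (φ : G ≃g G') : G.edgeSet.ncard = G'.edgeSet.ncard := by
  rw [← Nat.card_coe_set_eq, ← Nat.card_coe_set_eq]
  exact Nat.card_congr φ.mapEdgeSet

theorem Subgraph.edgeSet_ncard_coe {V : Type*} {G : SimpleGraph V} (G' : G.Subgraph) :
    G'.coe.edgeSet.ncard = G'.edgeSet.ncard := by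
  rw [← G'.image_coe_edgeSet_coe,
    Set.ncard_image_of_injective _ (Sym2.map.injective Subtype.val_injective)]

end SimpleGraph

local notation "μ₀" => volume.restrict (Set.Icc (0:ℝ) 1)

instance : IsProbabilityMeasure μ₀ :=
  ⟨by simp [Real.volume_Icc]⟩

namespace Kernel

variable (U : Kernel)

noncomputable def degree (x : ℝ) : ℝ := ∫ y in Set.Icc (0:ℝ) 1, U.toFun x y

theorem measurable_degree : Measurable U.degree :=
  (U.measurable.stronglyMeasurable.integral_prod_right' (ν := μ₀)).measurable

theorem norm_degree_le {C : ℝ} (hC : ∀ x y, |U.toFun x y| ≤ C) (x : ℝ) : ‖U.degree x‖ ≤ C := by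
  simpa [degree] using norm_integral_le_of_norm_le_const (μ := μ₀) (f := U.toFun x)
    (.of_forall fun y => (Real.norm_eq_abs _).trans_le (hC x y))

theorem integrable_prod {μ : Measure ℝ} [IsFiniteMeasure μ] :
    Integrable (fun p : ℝ × ℝ => U.toFun p.1 p.2) (μ.prod μ) := by
  obtain ⟨C, hC⟩ := U.bounded
  exact .of_bound U.measurable.aestronglyMeasurable C (.of_forall fun p => hC p.1 p.2)

theorem integrable_path_integrand {μ : Measure ℝ} [IsFiniteMeasure μ] :
    Integrable (fun q : ℝ × ℝ × ℝ => U.toFun q.2.1 q.1 * U.toFun q.1 q.2.2)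
      (μ.prod (μ.prod μ)) := by
  obtain ⟨C, hC⟩ := U.bounded
  have hm : Measurable fun q : ℝ × ℝ × ℝ => U.toFun q.2.1 q.1 * U.toFun q.1 q.2.2 := by
    have := U.measurable
    fun_prop
  refine .of_bound hm.aestronglyMeasurable (C * C) (.of_forall fun q => ?_)
  rw [norm_mul]
  exact mul_le_mul (hC _ _) (hC _ _) (norm_nonneg _) ((abs_nonneg _).trans (hC 0 0))

theorem balanced_of_integral_degree_sq_eq_zero
    (h : ∫ x in Set.Icc (0:ℝ) 1, U.degree x ^ 2 = 0) : U.Balanced := by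
  obtain ⟨C, hC⟩ := U.bounded
  have hint : Integrable (fun x => U.degree x ^ 2) μ₀ :=
    .of_bound (U.measurable_degree.pow_const 2).aestronglyMeasurable (C ^ 2)
      (.of_forall fun x => by
        rw [norm_pow]
        exact pow_le_pow_left₀ (norm_nonneg _) (U.norm_degree_le hC x) 2)
  filter_upwards [(integral_eq_zero_iff_of_nonneg (fun x => sq_nonneg _) hint).mp h] with x hx
  exact pow_eq_zero_iff two_ne_zero |>.mp hx

end Kernel

section HomDensity

variable {V : Type} {H : SimpleGraph V} (U : Kernel)

theorem edgeProd_of_edgeSet_eq_pair {a b c d : V} (hne : s(a, b) ≠ s(c, d))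
    (hE : H.edgeSet = {s(a, b), s(c, d)}) (x : V → ℝ) :
    edgeProd H U x = U.toFun (x a) (x b) * U.toFun (x c) (x d) := by
  rw [edgeProd, hE, finprod_mem_pair hne, Sym2.lift_mk, Sym2.lift_mk]

variable [Fintype V]

theorem homDensity_eq_integral_pi :
    homDensity H U = ∫ x, edgeProd H U x ∂(Measure.pi fun _ => μ₀) := by
  rw [homDensity, volume_pi, Measure.restrict_pi_pi]

theorem homDensity_of_edgeSet_eq_path {a b c : V} (hab : a ≠ b) (hac : a ≠ c) (hbc : b ≠ c)
    (hE : H.edgeSet = {s(a, b), s(b, c)}) :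
    homDensity H U = ∫ z in Set.Icc (0:ℝ) 1, U.degree z ^ 2 := by
  have hne : s(a, b) ≠ s(b, c) := by simp [hab, hac]
  have hmp := measurePreserving_eval_triple (μ := μ₀) hab.symm hbc hac
  simp_rw [homDensity_eq_integral_pi, edgeProd_of_edgeSet_eq_pair U hne hE]
  calc ∫ x, U.toFun (x a) (x b) * U.toFun (x b) (x c) ∂(Measure.pi fun _ => μ₀)
      = ∫ q, U.toFun q.2.1 q.1 * U.toFun q.1 q.2.2 ∂(Measure.prod μ₀ (Measure.prod μ₀ μ₀)) :=
        hmp.integral_comp_of_aestronglyMeasurable U.integrable_path_integrand.1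
    _ = ∫ z in Set.Icc (0:ℝ) 1, ∫ p, U.toFun p.1 z * U.toFun z p.2 ∂(Measure.prod μ₀ μ₀) :=
        integral_prod _ U.integrable_path_integrand
    _ = ∫ z in Set.Icc (0:ℝ) 1, U.degree z ^ 2 := by
        refine integral_congr_ae (.of_forall fun z => ?_)
        dsimp only
        rw [integral_prod_mul (fun s => U.toFun s z) (U.toFun z), sq, Kernel.degree]
        simp only [U.symm _ z]

theorem homDensity_of_edgeSet_eq_matching {a b c d : V} (hab : a ≠ b) (hcd : c ≠ d)
    (hac : a ≠ c) (had : a ≠ d) (hbc : b ≠ c) (hbd : b ≠ d)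
    (hE : H.edgeSet = {s(a, b), s(c, d)}) :
    homDensity H U = (∫ z in Set.Icc (0:ℝ) 1, U.degree z) ^ 2 := by
  have hne : s(a, b) ≠ s(c, d) := by simp [hac, had]
  have hmp := measurePreserving_eval_pair_pair (μ := μ₀) hab hcd hac had hbc hbd
  have hm : Measurable fun q : (ℝ × ℝ) × (ℝ × ℝ) =>
      U.toFun q.1.1 q.1.2 * U.toFun q.2.1 q.2.2 := by
    have := U.measurable
    fun_prop
  simp_rw [homDensity_eq_integral_pi, edgeProd_of_edgeSet_eq_pair U hne hE]
  calc ∫ x, U.toFun (x a) (x b) * U.toFun (x c) (x d) ∂(Measure.pi fun _ => μ₀)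
      = ∫ q, U.toFun q.1.1 q.1.2 * U.toFun q.2.1 q.2.2
          ∂(Measure.prod (Measure.prod μ₀ μ₀) (Measure.prod μ₀ μ₀)) :=
        hmp.integral_comp_of_aestronglyMeasurable hm.aestronglyMeasurable
    _ = (∫ p, U.toFun p.1 p.2 ∂(Measure.prod μ₀ μ₀)) ^ 2 := by
        rw [integral_prod_mul (fun p : ℝ × ℝ => U.toFun p.1 p.2)
          (fun p : ℝ × ℝ => U.toFun p.1 p.2), sq]
    _ = (∫ z in Set.Icc (0:ℝ) 1, U.degree z) ^ 2 := by
        rw [integral_prod _ U.integrable_prod]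
        rfl

theorem homDensity_nonneg_of_edgeSet_ncard_eq_two (h : H.edgeSet.ncard = 2) :
    0 ≤ homDensity H U := by
  obtain ⟨a, b, c, hab, hac, hbc, hE⟩ | ⟨a, b, c, d, hab, hcd, hac, had, hbc, hbd, hE⟩ :=
    SimpleGraph.exists_path_or_matching_of_edgeSet_ncard_eq_two h
  · rw [homDensity_of_edgeSet_eq_path U hab hac hbc hE]
    exact integral_nonneg fun x => sq_nonneg _
  · rw [homDensity_of_edgeSet_eq_matching U hab hcd hac had hbc hbd hE]
    exact sq_nonneg _

theorem homDensity_eq_zero_of_balanced (h : H.edgeSet.ncard = 2) (hU : U.Balanced) :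
    homDensity H U = 0 := by
  obtain ⟨a, b, c, hab, hac, hbc, hE⟩ | ⟨a, b, c, d, hab, hcd, hac, had, hbc, hbd, hE⟩ :=
    SimpleGraph.exists_path_or_matching_of_edgeSet_ncard_eq_two h
  · rw [homDensity_of_edgeSet_eq_path U hab hac hbc hE]
    exact integral_eq_zero_of_ae (hU.mono fun x hx => by simp [Kernel.degree, hx])
  · rw [homDensity_of_edgeSet_eq_matching U hab hcd hac had hbc hbd hE,
      integral_eq_zero_of_ae (f := U.degree) hU, sq, zero_mul]

theorem homDensity_of_iso_pathGraph_three (φ : H ≃g SimpleGraph.pathGraph 3) :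
    homDensity H U = ∫ z in Set.Icc (0:ℝ) 1, U.degree z ^ 2 :=
  homDensity_of_edgeSet_eq_path U (φ.symm.injective.ne (by decide))
    (φ.symm.injective.ne (by decide)) (φ.symm.injective.ne (by decide))
    φ.edgeSet_eq_of_pathGraph_three

end HomDensity

theorem FinGraph.edges_of_mem_subDeck {D : Multiset FinGraph} {l : ℕ} {K : FinGraph}
    (hK : K ∈ subDeck D l) : K.edges = l := by
  classical
  obtain ⟨G, -, hK⟩ := Multiset.mem_bind.mp hK
  obtain ⟨G', hG', rfl⟩ := Multiset.mem_map.mp hK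
  have hl : G' ∈ {G'' : G.G.Subgraph | G''.edgeSet.ncard = l} :=
    (Set.Finite.mem_toFinset _).mp hG'
  exact G'.edgeSet_ncard_coe.trans hl

theorem FinGraph.exists_mem_subDeck_iso_of_sD_pos {D : Multiset FinGraph} {H : FinGraph}
    (h : 0 < sD D H) : ∃ K ∈ subDeck D H.edges, Nonempty (K.G ≃g H.G) := by
  classical
  obtain ⟨G, hG, G', ⟨φ⟩⟩ :
      ∃ G ∈ D, {G' : G.G.Subgraph | Nonempty (G'.coe ≃g H.G)}.Nonempty := by
    by_contra! hD
    refine h.ne' (Multiset.sum_eq_zero fun n hn => ?_)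
    obtain ⟨G, hG, rfl⟩ := Multiset.mem_map.mp hn
    rw [hD G hG, Set.ncard_empty]
  refine ⟨FinGraph.of G'.coe,
    Multiset.mem_bind.mpr ⟨G, hG, Multiset.mem_map.mpr ⟨G', ?_, rfl⟩⟩, ⟨φ⟩⟩
  exact (Set.Finite.mem_toFinset _).mpr (G'.edgeSet_ncard_coe.symm.trans φ.edgeSet_ncard_eq)

theorem edges_pathF_two : (pathF 2).edges = 2 := by
  change (SimpleGraph.pathGraph 3).edgeSet.ncard = 2
  rw [SimpleGraph.Iso.refl.edgeSet_eq_of_pathGraph_three]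
  exact Set.ncard_pair (by decide)

theorem coeff_two_nonneg_general (D : Multiset FinGraph) (U : Kernel) :
    0 ≤ coeff D U 2 ∧ (0 < sD D (pathF 2) → (coeff D U 2 = 0 ↔ U.Balanced)) := by
  have hnonneg : ∀ r ∈ (subDeck D 2).map (·.density U), 0 ≤ r := by
    intro r hr
    obtain ⟨K, hK, rfl⟩ := Multiset.mem_map.mp hr
    exact homDensity_nonneg_of_edgeSet_ncard_eq_two U (FinGraph.edges_of_mem_subDeck hK)
  refine ⟨Multiset.sum_nonneg hnonneg, fun hs => ⟨fun h0 => ?_, fun hU => ?_⟩⟩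
  · obtain ⟨K, hK, ⟨φ⟩⟩ := FinGraph.exists_mem_subDeck_iso_of_sD_pos hs
    rw [edges_pathF_two] at hK
    have hmem := Multiset.mem_map_of_mem (·.density U) hK
    refine U.balanced_of_integral_degree_sq_eq_zero ?_
    rw [← homDensity_of_iso_pathGraph_three U φ]
    exact le_antisymm (h0 ▸ Multiset.single_le_sum hnonneg _ hmem) (hnonneg _ hmem)
  · refine Multiset.sum_eq_zero fun r hr => ?_
    obtain ⟨K, hK, rfl⟩ := Multiset.mem_map.mp hr
    exact homDensity_eq_zero_of_balanced U (FinGraph.edges_of_mem_subDeck hK) hU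

/-- For every `l`-deck `D` and every kernel `U`, the coefficient `c^D_{U,2}` is
nonnegative; moreover, if `s_D(P_2) > 0`, then `c^D_{U,2} = 0` iff `U` is balanced. -/
theorem coeff_two_nonneg (l : ℕ) (D : Multiset FinGraph) (hD : IsDeck D l) (U : Kernel) :
    0 ≤ coeff D U 2 ∧ (0 < sD D (pathF 2) → (coeff D U 2 = 0 ↔ U.Balanced)) :=
  coeff_two_nonneg_general D U
end
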